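/- arXiv:2207.04481 — 4 statements merged into one kernel-verified Lean document; each statement's English description precedes it below -/
import Mathlib

section
/- Under instrument exogeneity, exclusion, monotonicity and a nonzero first stage for instrument values z > z', the Wald estimand (E[Y|Z=z] - E[Y|Z=z']) / (P(D=1|Z=z) - P(D=1|Z=z')) equals the local average treatment effect E[Y(1) - Y(0) | D(z)=1, D(z')=0]. -/
/-!
Exogeneity makes the law of each function of `(D(z), D(z'), Y(1), Y(0))` given `Z = v` equal to
its unconditional law, so `E[Y | Z = v] = E[Y(D(v))]` and `P(D = 1 | Z = v) = P(D(v) = 1)`.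
For binary treatments, monotonicity makes `D(z) - D(z')` a.e. the indicator of the compliers
`C = {D(z) = 1, D(z') = 0}`. Hence the Wald numerator is `E[1_C (Y(1) - Y(0))]` and its denominator
is `P(C)`, whose ratio is `E[Y(1) - Y(0) | C]`.
-/

open MeasureTheory ProbabilityTheory

section

variable {Ω : Type*} [MeasurableSpace Ω] {μ : Measure Ω}

theorem ProbabilityTheory.IndepFun.identDistrib_cond_preimage [IsFiniteMeasure μ]
    {ι β : Type*} [MeasurableSpace ι] [MeasurableSpace β] {Z : Ω → ι} {X : Ω → β}
    (h : IndepFun Z X μ) (hZ : Measurable Z) (hX : AEMeasurable X μ)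
    {t : Set ι} (ht : MeasurableSet t) (hμt : μ (Z ⁻¹' t) ≠ 0) :
    IdentDistrib X X (μ[|Z ⁻¹' t]) μ where
  aemeasurable_fst := hX.mono_ac cond_absolutelyContinuous
  aemeasurable_snd := hX
  map_eq := by
    ext s hs
    rw [Measure.map_apply_of_aemeasurable (hX.mono_ac cond_absolutelyContinuous) hs,
      Measure.map_apply_of_aemeasurable hX hs, cond_apply (hZ ht),
      indepFun_iff_measure_inter_preimage_eq_mul.mp h t s ht hs, ← mul_assoc,
      ENNReal.inv_mul_cancel hμt (measure_ne_top _ _), one_mul]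

theorem integral_cond_eq_setIntegral_div (s : Set Ω) (f : Ω → ℝ) :
    ∫ ω, f ω ∂μ[|s] = (∫ ω in s, f ω ∂μ) / μ.real s := by
  rw [ProbabilityTheory.cond, integral_smul_measure, ENNReal.toReal_inv, smul_eq_mul,
    inv_mul_eq_div]
  rfl

theorem integral_eq_measureReal_of_binary {D : Ω → ℝ} (hD : Measurable D)
    (hbin : ∀ ω, D ω = 0 ∨ D ω = 1) : ∫ ω, D ω ∂μ = μ.real {ω | D ω = 1} := by
  have hind : D = {ω | D ω = 1}.indicator 1 := by
    funext ω
    rcases hbin ω with h | h <;> simp [h]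
  conv_lhs => rw [hind]
  exact integral_indicator_one (hD (measurableSet_singleton 1))

theorem integral_cond_preimage_eq_of_indepFun [IsFiniteMeasure μ] {ι E : Type*}
    [MeasurableSpace ι] [NormedAddCommGroup E] [NormedSpace ℝ E] [MeasurableSpace E]
    [BorelSpace E] {Z : Ω → ι} {X Y : Ω → E} (hZ : Measurable Z) {t : Set ι}
    (ht : MeasurableSet t) (hμt : μ (Z ⁻¹' t) ≠ 0) (hXY : ∀ ω, Z ω ∈ t → Y ω = X ω)
    (hindep : IndepFun Z X μ) (hX : AEMeasurable X μ) :
    ∫ ω, Y ω ∂μ[|Z ⁻¹' t] = ∫ ω, X ω ∂μ := by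
  calc ∫ ω, Y ω ∂μ[|Z ⁻¹' t] = ∫ ω, X ω ∂μ[|Z ⁻¹' t] :=
        integral_congr_ae <| by
          filter_upwards [ae_cond_mem (hZ ht)] with ω hω using hXY ω hω
    _ = ∫ ω, X ω ∂μ := (hindep.identDistrib_cond_preimage hZ hX ht hμt).integral_eq

theorem cond_preimage_apply_eq_of_indepFun [IsFiniteMeasure μ] {ι β : Type*}
    [MeasurableSpace ι] [MeasurableSpace β] {Z : Ω → ι} {X Y : Ω → β} (hZ : Measurable Z)
    {t : Set ι} (ht : MeasurableSet t) (hμt : μ (Z ⁻¹' t) ≠ 0)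
    (hXY : ∀ ω, Z ω ∈ t → Y ω = X ω) (hindep : IndepFun Z X μ) (hX : AEMeasurable X μ)
    {s : Set β} (hs : MeasurableSet s) :
    μ[Y ⁻¹' s | Z ⁻¹' t] = μ (X ⁻¹' s) := by
  calc μ[Y ⁻¹' s | Z ⁻¹' t] = μ[X ⁻¹' s | Z ⁻¹' t] :=
        measure_congr <| by
          filter_upwards [ae_cond_mem (hZ ht)] with ω hω using congrArg (· ∈ s) (hXY ω hω)
    _ = μ (X ⁻¹' s) :=
        (hindep.identDistrib_cond_preimage hZ hX ht hμt).measure_mem_eq hs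

/-- The outcome `Y(D)` realised under the binary treatment `D`. -/
def realizedOutcome (D Y1 Y0 : Ω → ℝ) (ω : Ω) : ℝ := D ω * Y1 ω + (1 - D ω) * Y0 ω

theorem integrable_realizedOutcome {D Y1 Y0 : Ω → ℝ} (hD : Measurable D)
    (hbin : ∀ ω, D ω = 0 ∨ D ω = 1) (hY1 : Integrable Y1 μ) (hY0 : Integrable Y0 μ) :
    Integrable (realizedOutcome D Y1 Y0) μ := by
  have hbound : ∀ ω, ‖D ω‖ ≤ 1 ∧ ‖1 - D ω‖ ≤ 1 := fun ω => by
    rcases hbin ω with h | h <;> simp [h]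
  exact (hY1.bdd_mul hD.aestronglyMeasurable (.of_forall fun ω => (hbound ω).1)).add
    (hY0.bdd_mul (by fun_prop) (.of_forall fun ω => (hbound ω).2))

theorem sub_ae_eq_indicator_compliers {Dz Dz' : Ω → ℝ}
    (hbin : ∀ ω, (Dz ω = 0 ∨ Dz ω = 1) ∧ (Dz' ω = 0 ∨ Dz' ω = 1))
    (hmono : ∀ᵐ ω ∂μ, Dz' ω ≤ Dz ω) :
    (fun ω => Dz ω - Dz' ω) =ᵐ[μ] {ω | Dz ω = 1 ∧ Dz' ω = 0}.indicator 1 := by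
  filter_upwards [hmono] with ω hω
  obtain ⟨h | h, h' | h'⟩ := hbin ω <;> simp [h, h'] at hω ⊢
  norm_num at hω

theorem integral_sub_mul_eq_setIntegral_compliers {Dz Dz' : Ω → ℝ} (hDz : Measurable Dz)
    (hDz' : Measurable Dz')
    (hbin : ∀ ω, (Dz ω = 0 ∨ Dz ω = 1) ∧ (Dz' ω = 0 ∨ Dz' ω = 1))
    (hmono : ∀ᵐ ω ∂μ, Dz' ω ≤ Dz ω) (f : Ω → ℝ) :
    ∫ ω, (Dz ω - Dz' ω) * f ω ∂μ = ∫ ω in {ω | Dz ω = 1 ∧ Dz' ω = 0}, f ω ∂μ := by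
  have hC : MeasurableSet {ω | Dz ω = 1 ∧ Dz' ω = 0} :=
    (hDz (measurableSet_singleton 1)).inter (hDz' (measurableSet_singleton 0))
  rw [← integral_indicator hC]
  refine integral_congr_ae ?_
  filter_upwards [sub_ae_eq_indicator_compliers hbin hmono] with ω hω
  rw [hω, ← Set.indicator_mul_left]
  simp only [Pi.one_apply, one_mul]

theorem integral_realizedOutcome_sub_eq_setIntegral_compliers {Dz Dz' Y1 Y0 : Ω → ℝ}
    (hDz : Measurable Dz) (hDz' : Measurable Dz') (hY1 : Integrable Y1 μ)
    (hY0 : Integrable Y0 μ) (hbin : ∀ ω, (Dz ω = 0 ∨ Dz ω = 1) ∧ (Dz' ω = 0 ∨ Dz' ω = 1))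
    (hmono : ∀ᵐ ω ∂μ, Dz' ω ≤ Dz ω) :
    ∫ ω, realizedOutcome Dz Y1 Y0 ω ∂μ - ∫ ω, realizedOutcome Dz' Y1 Y0 ω ∂μ
      = ∫ ω in {ω | Dz ω = 1 ∧ Dz' ω = 0}, Y1 ω - Y0 ω ∂μ := by
  rw [← integral_sub (integrable_realizedOutcome hDz (fun ω => (hbin ω).1) hY1 hY0)
    (integrable_realizedOutcome hDz' (fun ω => (hbin ω).2) hY1 hY0),
    ← integral_sub_mul_eq_setIntegral_compliers hDz hDz' hbin hmono]
  congr with ω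
  simp only [realizedOutcome]
  ring

theorem measureReal_sub_eq_measureReal_compliers [IsFiniteMeasure μ] {Dz Dz' : Ω → ℝ}
    (hDz : Measurable Dz) (hDz' : Measurable Dz')
    (hbin : ∀ ω, (Dz ω = 0 ∨ Dz ω = 1) ∧ (Dz' ω = 0 ∨ Dz' ω = 1))
    (hmono : ∀ᵐ ω ∂μ, Dz' ω ≤ Dz ω) :
    μ.real {ω | Dz ω = 1} - μ.real {ω | Dz' ω = 1} = μ.real {ω | Dz ω = 1 ∧ Dz' ω = 0} := by
  have hint {D : Ω → ℝ} (hD : Measurable D) (hbin : ∀ ω, D ω = 0 ∨ D ω = 1) :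
      Integrable D μ :=
    .of_bound hD.aestronglyMeasurable 1 <| .of_forall fun ω => by
      rcases hbin ω with h | h <;> simp [h]
  calc μ.real {ω | Dz ω = 1} - μ.real {ω | Dz' ω = 1} = ∫ ω, (Dz ω - Dz' ω) * 1 ∂μ := by
        rw [← integral_eq_measureReal_of_binary hDz (fun ω => (hbin ω).1),
          ← integral_eq_measureReal_of_binary hDz' (fun ω => (hbin ω).2),
          ← integral_sub (hint hDz fun ω => (hbin ω).1) (hint hDz' fun ω => (hbin ω).2)]
        simp only [mul_one]
    _ = ∫ _ in {ω | Dz ω = 1 ∧ Dz' ω = 0}, 1 ∂μ :=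
        integral_sub_mul_eq_setIntegral_compliers hDz hDz' hbin hmono 1
    _ = μ.real {ω | Dz ω = 1 ∧ Dz' ω = 0} := by simp

end

theorem wald_equals_late_general
    {Ω : Type*} [MeasurableSpace Ω] (μ : Measure Ω) [IsProbabilityMeasure μ]
    {ι : Type*} [MeasurableSpace ι] [MeasurableSingletonClass ι]
    (Z : Ω → ι) (z z' : ι)
    (Dz Dz' Y1 Y0 D Y : Ω → ℝ)
    (hZ : Measurable Z) (hDz : Measurable Dz) (hDz' : Measurable Dz')
    (hY1 : Integrable Y1 μ) (hY0 : Integrable Y0 μ)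
    (hbin : ∀ ω, (Dz ω = 0 ∨ Dz ω = 1) ∧ (Dz' ω = 0 ∨ Dz' ω = 1))
    -- observed treatment is the potential treatment at the realized instrument value
    (hDlink : ∀ ω, Z ω = z → D ω = Dz ω)
    (hDlink' : ∀ ω, Z ω = z' → D ω = Dz' ω)
    -- observed outcome, with exclusion built in: Y(d) does not depend on Z
    (hYobs : ∀ ω, Y ω = D ω * Y1 ω + (1 - D ω) * Y0 ω)
    -- exogeneity: Z independent of (D(z), D(z'), Y(1), Y(0))
    (hexo : IndepFun Z (fun ω => (Dz ω, Dz' ω, Y1 ω, Y0 ω)) μ)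
    -- monotonicity: P(D(z) ≥ D(z')) = 1
    (hmono : ∀ᵐ ω ∂μ, Dz' ω ≤ Dz ω)
    (hz : 0 < μ (Z ⁻¹' {z})) (hz' : 0 < μ (Z ⁻¹' {z'})) :
    (∫ ω, Y ω ∂(μ[|Z ⁻¹' {z}]) - ∫ ω, Y ω ∂(μ[|Z ⁻¹' {z'}])) /
      ((μ[|Z ⁻¹' {z}] {ω | D ω = 1}).toReal - (μ[|Z ⁻¹' {z'}] {ω | D ω = 1}).toReal)
      = ∫ ω, Y1 ω - Y0 ω ∂(μ[|{ω | Dz ω = 1 ∧ Dz' ω = 0}]) := by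
  have hψ : Measurable fun p : ℝ × ℝ × ℝ × ℝ => p.1 * p.2.2.1 + (1 - p.1) * p.2.2.2 := by
    fun_prop
  have hψ' : Measurable fun p : ℝ × ℝ × ℝ × ℝ => p.2.1 * p.2.2.1 + (1 - p.2.1) * p.2.2.2 := by
    fun_prop
  have hg := integrable_realizedOutcome hDz (fun ω => (hbin ω).1) hY1 hY0
  have hg' := integrable_realizedOutcome hDz' (fun ω => (hbin ω).2) hY1 hY0
  have hY_cond : ∫ ω, Y ω ∂μ[|Z ⁻¹' {z}] = ∫ ω, realizedOutcome Dz Y1 Y0 ω ∂μ :=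
    integral_cond_preimage_eq_of_indepFun hZ (measurableSet_singleton z) hz.ne'
      (fun ω hω => by rw [hYobs, hDlink ω hω]; rfl) (hexo.comp measurable_id hψ)
      hg.aemeasurable
  have hY_cond' : ∫ ω, Y ω ∂μ[|Z ⁻¹' {z'}] = ∫ ω, realizedOutcome Dz' Y1 Y0 ω ∂μ :=
    integral_cond_preimage_eq_of_indepFun hZ (measurableSet_singleton z') hz'.ne'
      (fun ω hω => by rw [hYobs, hDlink' ω hω]; rfl) (hexo.comp measurable_id hψ')
      hg'.aemeasurable
  have hD_cond : μ[{ω | D ω = 1} | Z ⁻¹' {z}] = μ {ω | Dz ω = 1} :=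
    cond_preimage_apply_eq_of_indepFun hZ (measurableSet_singleton z) hz.ne' hDlink
      (hexo.comp measurable_id measurable_fst) hDz.aemeasurable (measurableSet_singleton 1)
  have hD_cond' : μ[{ω | D ω = 1} | Z ⁻¹' {z'}] = μ {ω | Dz' ω = 1} :=
    cond_preimage_apply_eq_of_indepFun hZ (measurableSet_singleton z') hz'.ne' hDlink'
      (hexo.comp measurable_id measurable_snd.fst) hDz'.aemeasurable (measurableSet_singleton 1)
  rw [hY_cond, hY_cond', hD_cond, hD_cond', integral_cond_eq_setIntegral_div,
    integral_realizedOutcome_sub_eq_setIntegral_compliers hDz hDz' hY1 hY0 hbin hmono]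
  exact congrArg _ (measureReal_sub_eq_measureReal_compliers hDz hDz' hbin hmono)

/-- LATE theorem: under exogeneity, exclusion, monotonicity and a nonzero first
stage, the Wald estimand equals the local average treatment effect on compliers. -/
theorem wald_equals_late
    {Ω : Type*} [MeasurableSpace Ω] (μ : Measure Ω) [IsProbabilityMeasure μ]
    {ι : Type*} [MeasurableSpace ι] [MeasurableSingletonClass ι]
    (Z : Ω → ι) (z z' : ι)
    (Dz Dz' Y1 Y0 D Y : Ω → ℝ)
    (hZ : Measurable Z) (hDz : Measurable Dz) (hDz' : Measurable Dz')
    (hY1 : Integrable Y1 μ) (hY0 : Integrable Y0 μ)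
    (hbin : ∀ ω, (Dz ω = 0 ∨ Dz ω = 1) ∧ (Dz' ω = 0 ∨ Dz' ω = 1))
    -- observed treatment is the potential treatment at the realized instrument value
    (hDlink : ∀ ω, Z ω = z → D ω = Dz ω)
    (hDlink' : ∀ ω, Z ω = z' → D ω = Dz' ω)
    -- observed outcome, with exclusion built in: Y(d) does not depend on Z
    (hYobs : ∀ ω, Y ω = D ω * Y1 ω + (1 - D ω) * Y0 ω)
    -- exogeneity: Z independent of (D(z), D(z'), Y(1), Y(0))
    (hexo : IndepFun Z (fun ω => (Dz ω, Dz' ω, Y1 ω, Y0 ω)) μ)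
    -- monotonicity: P(D(z) ≥ D(z')) = 1
    (hmono : ∀ᵐ ω ∂μ, Dz' ω ≤ Dz ω)
    (hz : 0 < μ (Z ⁻¹' {z})) (hz' : 0 < μ (Z ⁻¹' {z'}))
    -- first stage: E[D | Z = z] ≠ E[D | Z = z']
    (hfs : ∫ ω, D ω ∂(μ[|Z ⁻¹' {z}]) ≠ ∫ ω, D ω ∂(μ[|Z ⁻¹' {z'}])) :
    (∫ ω, Y ω ∂(μ[|Z ⁻¹' {z}]) - ∫ ω, Y ω ∂(μ[|Z ⁻¹' {z'}])) /
      ((μ[|Z ⁻¹' {z}] {ω | D ω = 1}).toReal - (μ[|Z ⁻¹' {z'}] {ω | D ω = 1}).toReal)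
      = ∫ ω, Y1 ω - Y0 ω ∂(μ[|{ω | Dz ω = 1 ∧ Dz' ω = 0}]) :=
  wald_equals_late_general μ Z z z' Dz Dz' Y1 Y0 D Y hZ hDz hDz' hY1 hY0 hbin hDlink hDlink' hYobs
    hexo hmono hz hz'
end

section
/- Under the assumptions of the LATE theorem, the difference in propensity scores P(D=1|Z=z) - P(D=1|Z=z') equals the proportion of compliers P(D(z)=1, D(z')=0). -/
open MeasureTheory ProbabilityTheory

lemma cond_eq_of_indep
    {Ω : Type*} [MeasurableSpace Ω] (μ : Measure Ω) [IsProbabilityMeasure μ]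
    {ι : Type*} [MeasurableSpace ι] [MeasurableSingletonClass ι]
    (Z : Ω → ι) (z : ι) (W D : Ω → ℝ)
    (hZ : Measurable Z) (hW : Measurable W)
    (hDlink : ∀ ω, Z ω = z → D ω = W ω)
    (hindep : IndepFun Z W μ)
    (hz : 0 < μ (Z ⁻¹' {z})) :
    μ[|Z ⁻¹' {z}] {ω | D ω = 1} = μ {ω | W ω = 1} := by
  have hs : MeasurableSet (Z ⁻¹' {z}) := hZ (measurableSet_singleton z)
  have hinter : Z ⁻¹' {z} ∩ {ω | D ω = 1} = Z ⁻¹' {z} ∩ W ⁻¹' {1} := by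
    ext ω
    simp only [Set.mem_inter_iff, Set.mem_preimage, Set.mem_singleton_iff, Set.mem_setOf_eq]
    constructor
    · rintro ⟨h1, h2⟩; exact ⟨h1, by rw [← hDlink ω h1]; exact h2⟩
    · rintro ⟨h1, h2⟩; exact ⟨h1, by rw [hDlink ω h1]; exact h2⟩
  rw [cond_apply hs, hinter,
    hindep.measure_inter_preimage_eq_mul {z} {1} (measurableSet_singleton z)
      (measurableSet_singleton 1), ← mul_assoc,
    ENNReal.inv_mul_cancel hz.ne' (measure_ne_top μ _), one_mul]
  rfl

/-- The difference in propensity scores P(D=1|Z=z) - P(D=1|Z=z') equals the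
proportion of compliers P(D(z)=1, D(z')=0). -/
theorem propensity_diff_eq_complier_share
    {Ω : Type*} [MeasurableSpace Ω] (μ : Measure Ω) [IsProbabilityMeasure μ]
    {ι : Type*} [MeasurableSpace ι] [MeasurableSingletonClass ι]
    (Z : Ω → ι) (z z' : ι)
    (Dz Dz' D : Ω → ℝ)
    (hZ : Measurable Z) (hDz : Measurable Dz) (hDz' : Measurable Dz')
    (hbin : ∀ ω, (Dz ω = 0 ∨ Dz ω = 1) ∧ (Dz' ω = 0 ∨ Dz' ω = 1))
    (hDlink : ∀ ω, Z ω = z → D ω = Dz ω)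
    (hDlink' : ∀ ω, Z ω = z' → D ω = Dz' ω)
    -- exogeneity: Z independent of (D(z), D(z'))
    (hexo : IndepFun Z (fun ω => (Dz ω, Dz' ω)) μ)
    -- monotonicity: P(D(z) ≥ D(z')) = 1
    (hmono : ∀ᵐ ω ∂μ, Dz' ω ≤ Dz ω)
    (hz : 0 < μ (Z ⁻¹' {z})) (hz' : 0 < μ (Z ⁻¹' {z'})) :
    (μ[|Z ⁻¹' {z}] {ω | D ω = 1}).toReal - (μ[|Z ⁻¹' {z'}] {ω | D ω = 1}).toReal
      = (μ {ω | Dz ω = 1 ∧ Dz' ω = 0}).toReal := by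
  have hindep1 : IndepFun Z Dz μ := hexo.comp measurable_id measurable_fst
  have hindep2 : IndepFun Z Dz' μ := hexo.comp measurable_id measurable_snd
  rw [cond_eq_of_indep μ Z z Dz D hZ hDz hDlink hindep1 hz,
    cond_eq_of_indep μ Z z' Dz' D hZ hDz' hDlink' hindep2 hz']
  -- now pure measure identity
  set A := {ω | Dz ω = 1}
  set B := {ω | Dz' ω = 1}
  set C := {ω | Dz ω = 1 ∧ Dz' ω = 0}
  have hAeq : A =ᵐ[μ] (B ∪ C : Set Ω) := by
    rw [Filter.eventuallyEq_set]
    filter_upwards [hmono] with ω hω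
    simp only [A, B, C, Set.mem_setOf_eq, Set.mem_union]
    constructor
    · intro h1
      rcases (hbin ω).2 with h0 | h0
      · exact Or.inr ⟨h1, h0⟩
      · exact Or.inl h0
    · rintro (h0 | ⟨h1, _⟩)
      · rcases (hbin ω).1 with h | h
        · exfalso; rw [h0, h] at hω; linarith
        · exact h
      · exact h1
  have hdisj : Disjoint B C := by
    rw [Set.disjoint_left]
    rintro ω hB ⟨_, h0⟩
    simp only [B, Set.mem_setOf_eq] at hB
    rw [hB] at h0; norm_num at h0
  have hCmeas : MeasurableSet C := by
    have : C = Dz ⁻¹' {1} ∩ Dz' ⁻¹' {0} := rfl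
    rw [this]
    exact (hDz (measurableSet_singleton 1)).inter (hDz' (measurableSet_singleton 0))
  have hBmeas : MeasurableSet B := hDz' (measurableSet_singleton 1)
  have : μ A = μ B + μ C := by
    rw [measure_congr hAeq, measure_union hdisj hCmeas]
  rw [this, ENNReal.toReal_add (measure_ne_top μ _) (measure_ne_top μ _)]
  ring
end

section
/- In the agglomerative clustering setting with consistent propensity-score estimates and a true club structure, the Ward distance (|Q||Q'|/(|Q|+|Q'|))·‖mean(Q) − mean(Q')‖² between two estimated clusters Q, Q' contained in the same club converges in probability to 0, while the Ward distance between two clusters containing elements of distinct clubs k ≠ k' converges in probability to a strictly positive constant. -/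
open MeasureTheory Filter

/-! Both limits follow from a continuous mapping theorem: the estimated Ward distance is a
continuous function of the finitely many estimates, so it converges in measure to the same
function of the true club values. Within one club both cluster means equal the common club
value, giving `0`; across clubs `k ≠ k'` the means are the distinct values `pk k ≠ pk k'`. -/

section ConvergenceInMeasure

variable {α ι : Type*} [MeasurableSpace α] {μ : Measure α} {l : Filter ι}

theorem tendstoInMeasure_pi_const {J : Type*} [Fintype J] {E : J → Type*}
    [∀ z, PseudoMetricSpace (E z)] {f : ι → (z : J) → α → E z} {p : (z : J) → E z}
    (h : ∀ z, TendstoInMeasure μ (fun i => f i z) l (fun _ => p z)) :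
    TendstoInMeasure μ (fun i ω z => f i z ω) l (fun _ => p) := by
  rw [tendstoInMeasure_iff_dist]
  intro ε hε
  have hsub : ∀ i, {ω | ε ≤ dist (fun z => f i z ω) p} ⊆
      ⋃ z, {ω | ε ≤ dist (f i z ω) (p z)} := by
    intro i ω hω
    by_contra hc
    simp only [Set.mem_iUnion, Set.mem_ofPred_eq, not_exists, not_le] at hc
    exact (not_lt.mpr hω) ((dist_pi_lt_iff hε).mpr hc)
  have hsum : Tendsto (fun i => ∑ z, μ {ω | ε ≤ dist (f i z ω) (p z)}) l (nhds 0) := by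
    simpa using tendsto_finsetSum Finset.univ
      fun z _ => tendstoInMeasure_iff_dist.mp (h z) ε hε
  exact tendsto_of_tendsto_of_tendsto_of_le_of_le tendsto_const_nhds hsum (fun _ => zero_le)
    fun i => (measure_mono (hsub i)).trans (measure_iUnion_fintype_le _ _)

theorem MeasureTheory.TendstoInMeasure.comp_continuousAt_const {E F : Type*} [PseudoMetricSpace E]
    [PseudoMetricSpace F] {f : ι → α → E} {c : E} {g : E → F}
    (h : TendstoInMeasure μ f l (fun _ => c)) (hg : ContinuousAt g c) :
    TendstoInMeasure μ (fun i ω => g (f i ω)) l (fun _ => g c) := by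
  rw [tendstoInMeasure_iff_dist] at h ⊢
  intro ε hε
  obtain ⟨δ, hδ, hδg⟩ := Metric.continuousAt_iff.mp hg ε hε
  have hsub : ∀ i, {ω | ε ≤ dist (g (f i ω)) (g c)} ⊆ {ω | δ ≤ dist (f i ω) c} :=
    fun i ω hω => not_lt.mp fun hlt => (not_lt.mpr hω) (hδg hlt)
  exact tendsto_of_tendsto_of_tendsto_of_le_of_le tendsto_const_nhds (h δ hδ)
    (fun _ => zero_le) fun i => measure_mono (hsub i)

end ConvergenceInMeasure

section Ward

variable {J : Type*}

noncomputable def clusterMean (Q : Finset J) (v : J → ℝ) : ℝ :=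
  (∑ z ∈ Q, v z) / Q.card

noncomputable def wardDist (Q Q' : Finset J) (v : J → ℝ) : ℝ :=
  ((Q.card : ℝ) * Q'.card / (Q.card + Q'.card)) * (clusterMean Q v - clusterMean Q' v) ^ 2

theorem continuous_wardDist (Q Q' : Finset J) : Continuous (wardDist Q Q') := by
  unfold wardDist clusterMean
  fun_prop

theorem clusterMean_eq_of_forall_eq {Q : Finset J} {v : J → ℝ} {c : ℝ} (hQ : Q.Nonempty)
    (hv : ∀ z ∈ Q, v z = c) : clusterMean Q v = c := by
  have hcard : (Q.card : ℝ) ≠ 0 := by exact_mod_cast hQ.card_ne_zero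
  rw [clusterMean, Finset.sum_congr rfl hv, Finset.sum_const, nsmul_eq_mul]
  field_simp

theorem wardDist_pos {Q Q' : Finset J} {v : J → ℝ} (hQ : Q.Nonempty) (hQ' : Q'.Nonempty)
    (hv : clusterMean Q v ≠ clusterMean Q' v) : 0 < wardDist Q Q' v := by
  have hcard : (0 : ℝ) < Q.card := by exact_mod_cast hQ.card_pos
  have hcard' : (0 : ℝ) < Q'.card := by exact_mod_cast hQ'.card_pos
  have hsq : 0 < (clusterMean Q v - clusterMean Q' v) ^ 2 := by
    positivity [sub_ne_zero.mpr hv]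
  exact mul_pos (by positivity) hsq

end Ward

theorem ward_distance_limits_general
    {Ω : Type*} [MeasurableSpace Ω] (μ : Measure Ω)
    {J K : Type*} [Fintype J]
    (club : J → K) (pk : K → ℝ) (hdistinct : Function.Injective pk)
    (phat : ℕ → J → Ω → ℝ)
    (hcons : ∀ z, TendstoInMeasure μ (fun n => phat n z) atTop
      (fun _ => pk (club z)))
    (ward : Finset J → Finset J → ℕ → Ω → ℝ)
    (hward : ∀ Q Q' n ω, ward Q Q' n ω =
      ((Q.card : ℝ) * Q'.card / (Q.card + Q'.card)) *
        ((∑ z ∈ Q, phat n z ω) / Q.card - (∑ z ∈ Q', phat n z ω) / Q'.card) ^ 2) :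
    (∀ (Q Q' : Finset J) (k : K), Q.Nonempty → Q'.Nonempty →
      (∀ z ∈ Q, club z = k) → (∀ z ∈ Q', club z = k) →
      TendstoInMeasure μ (ward Q Q') atTop (fun _ => (0 : ℝ))) ∧
    (∀ (Q Q' : Finset J) (k k' : K), Q.Nonempty → Q'.Nonempty → k ≠ k' →
      (∀ z ∈ Q, club z = k) → (∀ z ∈ Q', club z = k') →
      ∃ d : ℝ, 0 < d ∧ TendstoInMeasure μ (ward Q Q') atTop (fun _ => d)) := by
  set p : J → ℝ := fun z => pk (club z)
  have hlim (Q Q' : Finset J) :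
      TendstoInMeasure μ (ward Q Q') atTop (fun _ => wardDist Q Q' p) := by
    have hward' : ward Q Q' = fun n ω => wardDist Q Q' fun z => phat n z ω := by
      funext n ω
      exact hward Q Q' n ω
    rw [hward']
    exact (tendstoInMeasure_pi_const hcons).comp_continuousAt_const
      (continuous_wardDist Q Q').continuousAt
  have hmean {Q : Finset J} {k : K} (hQ : Q.Nonempty) (hclub : ∀ z ∈ Q, club z = k) :
      clusterMean Q p = pk k :=
    clusterMean_eq_of_forall_eq hQ fun z hz => congrArg pk (hclub z hz)
  refine ⟨fun Q Q' k hQ hQ' hcQ hcQ' => ?_, fun Q Q' k k' hQ hQ' hkk' hcQ hcQ' => ?_⟩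
  · have hzero : wardDist Q Q' p = 0 := by
      rw [wardDist, hmean hQ hcQ, hmean hQ' hcQ', sub_self, zero_pow two_ne_zero, mul_zero]
    simpa only [hzero] using hlim Q Q'
  · have hne : clusterMean Q p ≠ clusterMean Q' p := by
      rw [hmean hQ hcQ, hmean hQ' hcQ']
      exact hdistinct.ne hkk'
    exact ⟨wardDist Q Q' p, wardDist_pos hQ hQ' hne, hlim Q Q'⟩

/-- Ward distances: for consistent propensity-score estimates with a true club
structure, the Ward distance between two clusters contained in the same club
converges in probability to 0, while the Ward distance between two clusters
contained in distinct clubs converges in probability to a strictly positive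
constant. -/
theorem ward_distance_limits
    {Ω : Type*} [MeasurableSpace Ω] (μ : Measure Ω) [IsProbabilityMeasure μ]
    {J K : Type*} [Fintype J] [DecidableEq J]
    (club : J → K) (pk : K → ℝ) (hdistinct : Function.Injective pk)
    (phat : ℕ → J → Ω → ℝ)
    (hcons : ∀ z, TendstoInMeasure μ (fun n => phat n z) atTop
      (fun _ => pk (club z)))
    (ward : Finset J → Finset J → ℕ → Ω → ℝ)
    (hward : ∀ Q Q' n ω, ward Q Q' n ω =
      ((Q.card : ℝ) * Q'.card / (Q.card + Q'.card)) *
        ((∑ z ∈ Q, phat n z ω) / Q.card - (∑ z ∈ Q', phat n z ω) / Q'.card) ^ 2) :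
    (∀ (Q Q' : Finset J) (k : K), Q.Nonempty → Q'.Nonempty →
      (∀ z ∈ Q, club z = k) → (∀ z ∈ Q', club z = k) →
      TendstoInMeasure μ (ward Q Q') atTop (fun _ => (0 : ℝ))) ∧
    (∀ (Q Q' : Finset J) (k k' : K), Q.Nonempty → Q'.Nonempty → k ≠ k' →
      (∀ z ∈ Q, club z = k) → (∀ z ∈ Q', club z = k') →
      ∃ d : ℝ, 0 < d ∧ TendstoInMeasure μ (ward Q Q') atTop (fun _ => d)) :=
  ward_distance_limits_general μ club pk hdistinct phat hcons ward hward
end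

section
/- Median estimator consistency under majority validity: let β̂_1^{(n)}, ..., β̂_J^{(n)} be estimators with β̂_j^{(n)} → β_j in probability, where β_j = β for all j in a set S with |S| > J/2 (strict majority), and β_j ≠ β possibly for j ∉ S. Then the sample median of (β̂_1^{(n)}, ..., β̂_J^{(n)}) converges in probability to β. -/
/-! If more than half of the entries of a finite family lie in an open interval, so does its
lower median: a sorted list whose middle entry is at or beyond an endpoint has at most half of
its entries strictly inside. Applied to `(B - ε, B + ε)`, the event that the median is `ε`-far
from `B` is covered by the events that the valid estimators `β̂_j`, `j ∈ S`, are `ε`-far from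
`β_j = B`, and a finite union of events of vanishing probability has vanishing probability. -/

open Finset Filter MeasureTheory Topology

namespace List

variable {α : Type*} [LinearOrder α] {l : List α} {k : ℕ}

theorem SortedLE.countP_lt_le_of_le_getElem (hl : l.SortedLE) (hk : k < l.length) {b : α}
    (hb : b ≤ l[k]) : l.countP (· < b) ≤ k := by
  have hdrop : (l.drop k).countP (· < b) = 0 := by
    refine countP_eq_zero.2 fun x hx => ?_
    obtain ⟨i, hi, rfl⟩ := getElem_of_mem hx
    simpa [getElem_drop] using hb.trans (hl.getElem_le_getElem_of_le (Nat.le_add_right k i))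
  calc l.countP (· < b) = (l.take k).countP (· < b) + (l.drop k).countP (· < b) := by
        rw [← countP_append, take_append_drop]
    _ ≤ k := by
        rw [hdrop, Nat.add_zero]
        exact countP_le_length.trans (length_take_le k l)

theorem SortedLE.countP_gt_add_lt_of_getElem_le (hl : l.SortedLE) (hk : k < l.length) {a : α}
    (ha : l[k] ≤ a) : l.countP (a < ·) + k < l.length := by
  have htake : (l.take (k + 1)).countP (a < ·) = 0 := by
    refine countP_eq_zero.2 fun x hx => ?_
    obtain ⟨i, hi, rfl⟩ := getElem_of_mem hx
    simp only [length_take] at hi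
    simpa [getElem_take] using (hl.getElem_le_getElem_of_le (by omega)).trans ha
  have hdrop : (l.drop (k + 1)).countP (a < ·) ≤ l.length - (k + 1) :=
    countP_le_length.trans (length_drop ..).le
  have hsplit : l.countP (a < ·) =
      (l.take (k + 1)).countP (a < ·) + (l.drop (k + 1)).countP (a < ·) := by
    rw [← countP_append, take_append_drop]
  omega

end List

namespace Multiset

variable {α : Type*} [LinearOrder α]

def lowerMedian (s : Multiset α) (d : α) : α :=
  (s.sort (· ≤ ·)).getD ((card s - 1) / 2) d

theorem lowerMedian_mem_Ioo {s : Multiset α} {d a b : α}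
    (h : card s < 2 * s.countP (· ∈ Set.Ioo a b)) : s.lowerMedian d ∈ Set.Ioo a b := by
  set l := s.sort (· ≤ ·)
  have hl : l.SortedLE := (s.pairwise_sort (· ≤ ·)).sortedLE
  have hlen : l.length = card s := s.length_sort (· ≤ ·)
  have hcount : l.countP (· ∈ Set.Ioo a b) = s.countP (· ∈ Set.Ioo a b) := by
    rw [← coe_countP, s.sort_eq]
  have hin : l.countP (· ∈ Set.Ioo a b) ≤ l.length := List.countP_le_length
  have hk : (card s - 1) / 2 < l.length := by omega
  rw [lowerMedian, List.getD_eq_getElem l d hk]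
  constructor
  · by_contra! hka
    have := hl.countP_gt_add_lt_of_getElem_le hk hka
    have : l.countP (· ∈ Set.Ioo a b) ≤ l.countP (a < ·) :=
      List.countP_mono_left fun x _ hx => by simp_all
    omega
  · by_contra! hbk
    have := hl.countP_lt_le_of_le_getElem hk hbk
    have : l.countP (· ∈ Set.Ioo a b) ≤ l.countP (· < b) :=
      List.countP_mono_left fun x _ hx => by simp_all
    omega

theorem lowerMedian_map_mem_Ioo {ι : Type*} [Fintype ι] {v : ι → α} {d a b : α}
    (S : Finset ι) (hS : Fintype.card ι < 2 * #S) (hv : ∀ j ∈ S, v j ∈ Set.Ioo a b) :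
    (univ.val.map v).lowerMedian d ∈ Set.Ioo a b := by
  refine lowerMedian_mem_Ioo ?_
  have : #S ≤ #(univ.filter fun j => v j ∈ Set.Ioo a b) :=
    Finset.card_le_card fun j hj => Finset.mem_filter.2 ⟨Finset.mem_univ j, hv j hj⟩
  rw [card_map, countP_map, ← Finset.filter_val, Finset.card_val, Finset.card_val,
    Finset.card_univ]
  omega

end Multiset

namespace MeasureTheory

variable {Ω ι κ E : Type*} [MeasurableSpace Ω] {μ : Measure Ω} [PseudoMetricSpace E]
  {l : Filter ι}

theorem tendstoInMeasure_of_forall_dist_lt {f : ι → κ → Ω → E} {g : κ → Ω → E}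
    {F : ι → Ω → E} {G : Ω → E} (S : Finset κ)
    (hf : ∀ j ∈ S, TendstoInMeasure μ (fun i => f i j) l (g j))
    (hF : ∀ ε > 0, ∀ i x, (∀ j ∈ S, dist (f i j x) (g j x) < ε) →
      dist (F i x) (G x) < ε) :
    TendstoInMeasure μ F l G := by
  simp_rw [tendstoInMeasure_iff_dist] at hf ⊢
  intro ε hε
  have hcover : ∀ i,
      {x | ε ≤ dist (F i x) (G x)} ⊆ ⋃ j ∈ S, {x | ε ≤ dist (f i j x) (g j x)} := by
    intro i x hx
    contrapose! hx
    simpa using hF ε hε i x (by simpa using hx)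
  have hsum : Tendsto (fun i => ∑ j ∈ S, μ {x | ε ≤ dist (f i j x) (g j x)}) l (𝓝 0) := by
    simpa using tendsto_finsetSum S fun j hj => hf j hj ε hε
  exact tendsto_of_tendsto_of_tendsto_of_le_of_le tendsto_const_nhds hsum (fun _ => zero_le)
    fun i => (measure_mono (hcover i)).trans (measure_biUnion_finset_le S _)

end MeasureTheory

theorem median_estimator_consistent_general
    {Ω : Type*} [MeasurableSpace Ω] (μ : Measure Ω)
    (J : ℕ)
    (bhat : ℕ → Fin J → Ω → ℝ) (β : Fin J → ℝ) (B : ℝ)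
    (hcons : ∀ j, TendstoInMeasure μ (fun n => bhat n j) atTop (fun _ => β j))
    (S : Finset (Fin J)) (hmaj : J < 2 * S.card)
    (hS : ∀ j ∈ S, β j = B)
    (med : (Fin J → ℝ) → ℝ)
    (hmed : ∀ v, med v =
      ((Multiset.map v Finset.univ.val).sort (· ≤ ·)).getD ((J - 1) / 2) 0) :
    TendstoInMeasure μ (fun n ω => med (fun j => bhat n j ω)) atTop
      (fun _ => B) := by
  refine tendstoInMeasure_of_forall_dist_lt S (fun j _ => hcons j) fun ε _ n ω hclose => ?_
  have hmed' :
      med (fun j => bhat n j ω) = (univ.val.map fun j => bhat n j ω).lowerMedian 0 := by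
    simp [hmed, Multiset.lowerMedian]
  rw [hmed', ← Metric.mem_ball, Real.ball_eq_Ioo]
  refine Multiset.lowerMedian_map_mem_Ioo S (by simpa using hmaj) fun j hj => ?_
  rw [← Real.ball_eq_Ioo, Metric.mem_ball, ← hS j hj]
  exact hclose j hj

/-- Median estimator consistency under majority validity: if each estimator
β̂_j converges in probability to β_j, and a strict majority of the limits
equal the common value β, then the sample (lower) median converges in
probability to β. -/
theorem median_estimator_consistent
    {Ω : Type*} [MeasurableSpace Ω] (μ : Measure Ω) [IsProbabilityMeasure μ]
    (J : ℕ)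
    (bhat : ℕ → Fin J → Ω → ℝ) (β : Fin J → ℝ) (B : ℝ)
    (hcons : ∀ j, TendstoInMeasure μ (fun n => bhat n j) atTop (fun _ => β j))
    (S : Finset (Fin J)) (hmaj : J < 2 * S.card)
    (hS : ∀ j ∈ S, β j = B)
    (med : (Fin J → ℝ) → ℝ)
    (hmed : ∀ v, med v =
      ((Multiset.map v Finset.univ.val).sort (· ≤ ·)).getD ((J - 1) / 2) 0) :
    TendstoInMeasure μ (fun n ω => med (fun j => bhat n j ω)) atTop
      (fun _ => B) :=
  median_estimator_consistent_general μ J bhat β B hcons S hmaj hS med hmed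
end
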